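/- Let (A, {·_{α,β}}, {N_ω}) be a Nijenhuis family Ω-associative algebra and (M, {N_{M,ω}}) a Nijenhuis family bimodule. Define a ▷_{α,β} m := N_α(a) ·_{α,β} m − N_{M,αβ}(a ·_{α,β} m). Then the Nijenhuis compatibility holds for the new left action: N_α(a) ▷_{α,β} N_{M,β}(m) = N_{M,αβ}(a ▷_{α,β} N_{M,β}(m) + N_α(a) ▷_{α,β} m − N_{M,αβ}(a ▷_{α,β} m)) for all a ∈ A and m ∈ M. -/

import Mathlib

/-- A Nijenhuis family on an `Ω`-associative algebra. -/
def NijenhuisFamily {k Ω A : Type*} [Field k] [Semigroup Ω] [AddCommGroup A]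
    [Module k A] (μ : Ω → Ω → A →ₗ[k] A →ₗ[k] A) (N : Ω → A →ₗ[k] A) : Prop :=
  ∀ (α β : Ω) (a b : A),
    μ α β (N α a) (N β b)
      = N (α * β) (μ α β (N α a) b + μ α β a (N β b) - N (α * β) (μ α β a b))

/-!
Rearranging the left compatibility of `N_M` shows that `▷` commutes with `N_M` in its module
argument: `a ▷ N_M(m) = N_M(a ▷ m)`. Both sides of the claimed identity then reduce to
`N_M(N(a) ▷ m)`.
-/

section NewLeftAction

variable {k Ω A M : Type*} [CommRing k] [Mul Ω] [AddCommGroup A] [Module k A]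
  [AddCommGroup M] [Module k M]

def newLeftAction (l : Ω → Ω → A →ₗ[k] M →ₗ[k] M) (N : Ω → A →ₗ[k] A)
    (NM : Ω → M →ₗ[k] M) (α β : Ω) (a : A) (m : M) : M :=
  l α β (N α a) m - NM (α * β) (l α β a m)

theorem newLeftAction_NM (l : Ω → Ω → A →ₗ[k] M →ₗ[k] M) (N : Ω → A →ₗ[k] A)
    (NM : Ω → M →ₗ[k] M)
    (hNMl : ∀ (α β : Ω) (a : A) (m : M),
      l α β (N α a) (NM β m)
        = NM (α * β) (l α β a (NM β m) + l α β (N α a) m - NM (α * β) (l α β a m)))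
    (α β : Ω) (a : A) (m : M) :
    newLeftAction l N NM α β a (NM β m) = NM (α * β) (newLeftAction l N NM α β a m) := by
  rw [newLeftAction, newLeftAction, hNMl, ← map_sub]
  abel

end NewLeftAction

theorem new_left_action_nijenhuis_compatibility_general
    {k : Type*} [Field k] {Ω : Type*} [Semigroup Ω]
    {A : Type*} [AddCommGroup A] [Module k A]
    {M : Type*} [AddCommGroup M] [Module k M]
    (l : Ω → Ω → A →ₗ[k] M →ₗ[k] M)
    (N : Ω → A →ₗ[k] A)
    (NM : Ω → M →ₗ[k] M)
    (hNMl : ∀ (α β : Ω) (a : A) (m : M),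
      l α β (N α a) (NM β m)
        = NM (α * β) (l α β a (NM β m) + l α β (N α a) m
            - NM (α * β) (l α β a m))) :
    let rhd : Ω → Ω → A → M → M := fun α β a m =>
      l α β (N α a) m - NM (α * β) (l α β a m)
    ∀ (α β : Ω) (a : A) (m : M),
      rhd α β (N α a) (NM β m)
        = NM (α * β) (rhd α β a (NM β m) + rhd α β (N α a) m
            - NM (α * β) (rhd α β a m)) := by
  intro rhd α β a m
  show newLeftAction l N NM α β (N α a) (NM β m)
    = NM (α * β) (newLeftAction l N NM α β a (NM β m) + newLeftAction l N NM α β (N α a) m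
        - NM (α * β) (newLeftAction l N NM α β a m))
  rw [newLeftAction_NM l N NM hNMl, newLeftAction_NM l N NM hNMl, add_sub_cancel_left]

/-- The Nijenhuis compatibility for the new left action `▷`. -/
theorem new_left_action_nijenhuis_compatibility
    {k : Type*} [Field k] {Ω : Type*} [Semigroup Ω]
    {A : Type*} [AddCommGroup A] [Module k A]
    {M : Type*} [AddCommGroup M] [Module k M]
    (μ : Ω → Ω → A →ₗ[k] A →ₗ[k] A)
    (hassoc : ∀ (α β γ : Ω) (a b c : A),
      μ (α * β) γ (μ α β a b) c = μ α (β * γ) a (μ β γ b c))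
    (l : Ω → Ω → A →ₗ[k] M →ₗ[k] M) (r : Ω → Ω → M →ₗ[k] A →ₗ[k] M)
    (hl : ∀ (α β γ : Ω) (a b : A) (m : M),
      l (α * β) γ (μ α β a b) m = l α (β * γ) a (l β γ b m))
    (hmid : ∀ (α β γ : Ω) (a : A) (m : M) (b : A),
      r (α * β) γ (l α β a m) b = l α (β * γ) a (r β γ m b))
    (hr : ∀ (α β γ : Ω) (m : M) (a b : A),
      r (α * β) γ (r α β m a) b = r α (β * γ) m (μ β γ a b))
    (N : Ω → A →ₗ[k] A) (hN : NijenhuisFamily μ N)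
    (NM : Ω → M →ₗ[k] M)
    (hNMl : ∀ (α β : Ω) (a : A) (m : M),
      l α β (N α a) (NM β m)
        = NM (α * β) (l α β a (NM β m) + l α β (N α a) m
            - NM (α * β) (l α β a m)))
    (hNMr : ∀ (α β : Ω) (m : M) (a : A),
      r α β (NM α m) (N β a)
        = NM (α * β) (r α β m (N β a) + r α β (NM α m) a
            - NM (α * β) (r α β m a))) :
    let rhd : Ω → Ω → A → M → M := fun α β a m =>
      l α β (N α a) m - NM (α * β) (l α β a m)
    ∀ (α β : Ω) (a : A) (m : M),
      rhd α β (N α a) (NM β m)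
        = NM (α * β) (rhd α β a (NM β m) + rhd α β (N α a) m
            - NM (α * β) (rhd α β a m)) :=
  new_left_action_nijenhuis_compatibility_general l N NM hNMl
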